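/- Let M be a matroid with rank function r on a finite ground set 𝒳 all of whose independent sets have cardinality at most q, and let ≻ be a strict linear order on 𝒳. Every choice rule C on 𝒳 satisfying matroidal objectives (for every A ⊆ 𝒳 and A′ ⊆ A, r(C(A)) ≥ r(A′)), no justified envy under rank (for every A ⊆ 𝒳, x ∈ C(A), y ∈ A \ C(A): y ≻ x implies r((C(A) \ {x}) ∪ {y}) < r(C(A))), and non-wastefulness (|C(A)| = min(|A|, q) for every A ⊆ 𝒳) satisfies path independence and size monotonicity. -/
import Mathlib

/-- A matroid on the finite ground set `α`, given by its independent sets. -/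
structure FinMatroid (α : Type*) [DecidableEq α] where
  Indep : Finset α → Prop
  indep_empty : Indep ∅
  indep_subset : ∀ ⦃A B : Finset α⦄, Indep B → A ⊆ B → Indep A
  indep_exchange : ∀ ⦃A B : Finset α⦄, Indep A → Indep B → A.card < B.card →
    ∃ x ∈ B, x ∉ A ∧ Indep (insert x A)

open Classical in
/-- The rank of a set: the common cardinality of its maximal independent
subsets. -/
noncomputable def FinMatroid.rank {α : Type*} [DecidableEq α]
    (M : FinMatroid α) (X : Finset α) : ℕ :=
  (X.powerset.filter fun A => M.Indep A).sup Finset.card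

/-- `Y` is a basis of `X`: a maximal independent subset of `X`. -/
def FinMatroid.IsBasisOf {α : Type*} [DecidableEq α]
    (M : FinMatroid α) (Y X : Finset α) : Prop :=
  Y ⊆ X ∧ M.Indep Y ∧ ∀ Z : Finset α, Z ⊆ X → M.Indep Z → Y ⊆ Z → Z = Y

set_option linter.unusedSectionVars false
set_option linter.unusedVariables false

namespace FinMatroid

variable {α : Type*} [DecidableEq α] (M : FinMatroid α)

open Classical in
lemma rank_def (X : Finset α) :
    M.rank X = (X.powerset.filter fun A => M.Indep A).sup Finset.card := rfl

lemma rank_le_card (X : Finset α) : M.rank X ≤ X.card := by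
  classical
  rw [M.rank_def]
  apply Finset.sup_le
  intro B hB
  rw [Finset.mem_filter, Finset.mem_powerset] at hB
  exact Finset.card_le_card hB.1

lemma le_rank_of_indep {B X : Finset α} (hBX : B ⊆ X) (hB : M.Indep B) :
    B.card ≤ M.rank X := by
  classical
  rw [M.rank_def]
  exact Finset.le_sup (by rw [Finset.mem_filter, Finset.mem_powerset]; exact ⟨hBX, hB⟩)

lemma rank_mono {X Y : Finset α} (h : X ⊆ Y) : M.rank X ≤ M.rank Y := by
  classical
  rw [M.rank_def]
  apply Finset.sup_le
  intro B hB
  rw [Finset.mem_filter, Finset.mem_powerset] at hB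
  exact M.le_rank_of_indep (hB.1.trans h) hB.2

lemma exists_basis (X : Finset α) :
    ∃ B, B ⊆ X ∧ M.Indep B ∧ B.card = M.rank X := by
  classical
  have hne : (X.powerset.filter fun A => M.Indep A).Nonempty :=
    ⟨∅, by rw [Finset.mem_filter, Finset.mem_powerset]; exact ⟨Finset.empty_subset _, M.indep_empty⟩⟩
  obtain ⟨B, hB, hc⟩ := Finset.exists_mem_eq_sup _ hne Finset.card
  rw [Finset.mem_filter, Finset.mem_powerset] at hB
  exact ⟨B, hB.1, hB.2, by rw [M.rank_def] at *; omega⟩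

lemma rank_of_indep {X : Finset α} (h : M.Indep X) : M.rank X = X.card :=
  le_antisymm (M.rank_le_card X) (M.le_rank_of_indep Finset.Subset.rfl h)

lemma indep_of_rank_eq_card {X : Finset α} (h : M.rank X = X.card) : M.Indep X := by
  obtain ⟨B, hBX, hBI, hBc⟩ := M.exists_basis X
  have : B = X := Finset.eq_of_subset_of_card_le hBX (by omega)
  rwa [← this]

lemma rank_insert_le (a : α) (X : Finset α) :
    M.rank (insert a X) ≤ M.rank X + 1 := by
  obtain ⟨B, hBX, hBI, hBc⟩ := M.exists_basis (insert a X)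
  have h1 : B.erase a ⊆ X := by
    intro u hu
    rcases Finset.mem_insert.mp (hBX (Finset.mem_of_mem_erase hu)) with h | h
    · exact absurd h (Finset.ne_of_mem_erase hu)
    · exact h
  have h2 := M.le_rank_of_indep h1 (M.indep_subset hBI (Finset.erase_subset _ _))
  have h3 := Finset.card_erase_le (a := a) (s := B)
  have h4 : B.card - 1 ≤ (B.erase a).card := Finset.pred_card_le_card_erase
  omega

lemma rank_le_rank_erase_add_one (a : α) (X : Finset α) :
    M.rank X ≤ M.rank (X.erase a) + 1 := by
  by_cases h : a ∈ X
  · have := M.rank_insert_le a (X.erase a)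
    rwa [Finset.insert_erase h] at this
  · rw [Finset.erase_eq_of_notMem h]; omega

lemma exists_extend {J W : Finset α} (hJW : J ⊆ W) (hJ : M.Indep J) :
    ∃ B, J ⊆ B ∧ B ⊆ W ∧ M.Indep B ∧ B.card = M.rank W := by
  have H : ∀ n (J : Finset α), J ⊆ W → M.Indep J → M.rank W - J.card ≤ n →
      ∃ B, J ⊆ B ∧ B ⊆ W ∧ M.Indep B ∧ B.card = M.rank W := by
    intro n
    induction n with
    | zero =>
      intro J hJW hJ hn
      have h1 := M.le_rank_of_indep hJW hJ
      exact ⟨J, Finset.Subset.rfl, hJW, hJ, by omega⟩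
    | succ n ih =>
      intro J hJW hJ hn
      by_cases hc : M.rank W ≤ J.card
      · have h1 := M.le_rank_of_indep hJW hJ
        exact ⟨J, Finset.Subset.rfl, hJW, hJ, by omega⟩
      · push_neg at hc
        obtain ⟨B₀, hB₀W, hB₀I, hB₀c⟩ := M.exists_basis W
        obtain ⟨x, hxB₀, hxJ, hxI⟩ := M.indep_exchange hJ hB₀I (by omega)
        obtain ⟨B, hB1, hB2, hB3, hB4⟩ := ih (insert x J)
          (Finset.insert_subset (hB₀W hxB₀) hJW) hxI
          (by rw [Finset.card_insert_of_notMem hxJ]; omega)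
        exact ⟨B, (Finset.subset_insert _ _).trans hB1, hB2, hB3, hB4⟩
  exact H (M.rank W - J.card) J hJW hJ le_rfl

/-- R3: if every element of `Y` keeps the rank of `X`, the union keeps it too. -/
lemma rank_union_eq {X Y : Finset α} (h : ∀ a ∈ Y, M.rank (insert a X) = M.rank X) :
    M.rank (X ∪ Y) = M.rank X := by
  refine le_antisymm ?_ (M.rank_mono Finset.subset_union_left)
  obtain ⟨B, hBX, hBI, hBc⟩ := M.exists_basis X
  obtain ⟨I, hIU, hII, hIc⟩ := M.exists_basis (X ∪ Y)
  rw [← hIc, ← hBc]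
  by_contra hlt
  push_neg at hlt
  obtain ⟨x, hxI, hxB, hxind⟩ := M.indep_exchange hBI hII hlt
  rcases Finset.mem_union.mp (hIU hxI) with hxX | hxY
  · have h2 := M.le_rank_of_indep (Finset.insert_subset hxX hBX) hxind
    rw [Finset.card_insert_of_notMem hxB] at h2
    omega
  · have h2 := M.le_rank_of_indep
      (show insert x B ⊆ insert x X from Finset.insert_subset_insert _ hBX) hxind
    rw [Finset.card_insert_of_notMem hxB, h x hxY] at h2
    omega

/-- R5: closure is monotone. -/
lemma rank_insert_eq_of_subset {Z W : Finset α} (a : α) (hZW : Z ⊆ W)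
    (h : M.rank (insert a Z) = M.rank Z) : M.rank (insert a W) = M.rank W := by
  refine le_antisymm ?_ (M.rank_mono (Finset.subset_insert _ _))
  by_contra hlt
  push_neg at hlt
  have haW : a ∉ W := by
    intro haW
    rw [Finset.insert_eq_self.mpr haW] at hlt
    omega
  have haZ : a ∉ Z := fun hz => haW (hZW hz)
  obtain ⟨BZ, hBZ1, hBZ2, hBZ3⟩ := M.exists_basis Z
  obtain ⟨BW, hBW1, hBW2, hBW3, hBW4⟩ := M.exists_extend (hBZ1.trans hZW) hBZ2
  obtain ⟨K, hK1, hK2, hK3⟩ := M.exists_basis (insert a W)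
  obtain ⟨x, hxK, hxBW, hxI⟩ := M.indep_exchange hBW3 hK2 (by omega)
  rcases Finset.mem_insert.mp (hK1 hxK) with hxa | hxW
  · subst hxa
    have h5 : insert x BZ ⊆ insert x Z := Finset.insert_subset_insert _ hBZ1
    have h6 := M.le_rank_of_indep h5 (M.indep_subset hxI (Finset.insert_subset_insert _ hBW1))
    rw [Finset.card_insert_of_notMem (fun hz => haZ (hBZ1 hz)), h] at h6
    omega
  · have h6 := M.le_rank_of_indep (Finset.insert_subset hxW hBW2) hxI
    rw [Finset.card_insert_of_notMem hxBW] at h6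
    omega

section LO
variable [LinearOrder α]

/-- One-sided step for the uniqueness lemma. -/
lemma uniq_aux {S T : Finset α} (hcard : S.card = T.card)
    (hrank : M.rank S = M.rank T) {z : α} (hzS : z ∈ S) (hzT : z ∉ T)
    (hmin : ∀ u ∈ T, u ∉ S → z < u)
    (hS : ∀ y ∈ T, y ∉ S → z < y → M.rank (insert y (S.erase z)) < M.rank S) :
    False := by
  classical
  have hTS : (T \ S).Nonempty := by
    rw [Finset.sdiff_nonempty]
    intro hsub
    have : T = S := Finset.eq_of_subset_of_card_le hsub (by omega)
    exact hzT (this ▸ hzS)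
  obtain ⟨t₀, ht₀⟩ := hTS
  rw [Finset.mem_sdiff] at ht₀
  have h₀ := hS t₀ ht₀.1 ht₀.2 (hmin t₀ ht₀.1 ht₀.2)
  have hX1 : M.rank (S.erase z) ≤ M.rank (insert t₀ (S.erase z)) :=
    M.rank_mono (Finset.subset_insert _ _)
  have hX2 := M.rank_le_rank_erase_add_one z S
  -- rank (S.erase z) = rank S - 1
  have hins : ∀ u ∈ T \ S, M.rank (insert u (S.erase z)) = M.rank (S.erase z) := by
    intro u hu
    rw [Finset.mem_sdiff] at hu
    have h1 := hS u hu.1 hu.2 (hmin u hu.1 hu.2)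
    have h2 : M.rank (S.erase z) ≤ M.rank (insert u (S.erase z)) :=
      M.rank_mono (Finset.subset_insert _ _)
    omega
  have hun := M.rank_union_eq hins
  have hTsub : T ⊆ S.erase z ∪ (T \ S) := by
    intro u hu
    by_cases huS : u ∈ S
    · exact Finset.mem_union.mpr (Or.inl (Finset.mem_erase.mpr ⟨fun he => hzT (he ▸ hu), huS⟩))
    · exact Finset.mem_union.mpr (Or.inr (Finset.mem_sdiff.mpr ⟨hu, huS⟩))
  have hfin := M.rank_mono hTsub
  rw [hun] at hfin
  omega

/-- Uniqueness: two sets of equal cardinality and rank, each satisfying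
no-justified-envy against the other, coincide. -/
lemma uniq {S T : Finset α} (hcard : S.card = T.card)
    (hrank : M.rank S = M.rank T)
    (hS : ∀ x ∈ S, ∀ y ∈ T, y ∉ S → x < y → M.rank (insert y (S.erase x)) < M.rank S)
    (hT : ∀ x ∈ T, ∀ y ∈ S, y ∉ T → x < y → M.rank (insert y (T.erase x)) < M.rank T) :
    S = T := by
  classical
  by_contra hne
  have hU : ((S \ T) ∪ (T \ S)).Nonempty := by
    by_contra h
    rw [Finset.not_nonempty_iff_eq_empty, Finset.union_eq_empty] at h
    exact hne (Finset.Subset.antisymm (Finset.sdiff_eq_empty_iff_subset.mp h.1)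
      (Finset.sdiff_eq_empty_iff_subset.mp h.2))
  set z := ((S \ T) ∪ (T \ S)).min' hU with hz
  have hzmem := Finset.min'_mem _ hU
  rcases Finset.mem_union.mp hzmem with hzS | hzT
  · rw [Finset.mem_sdiff] at hzS
    refine M.uniq_aux hcard hrank hzS.1 hzS.2 ?_ (fun y hyT hyS hzy => hS z hzS.1 y hyT hyS hzy)
    intro u hu huS
    have h1 : u ∈ (S \ T) ∪ (T \ S) :=
      Finset.mem_union.mpr (Or.inr (Finset.mem_sdiff.mpr ⟨hu, huS⟩))
    have h2 := Finset.min'_le _ _ h1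
    have h3 : z ≠ u := fun he => huS (he ▸ hzS.1)
    exact lt_of_le_of_ne h2 h3
  · rw [Finset.mem_sdiff] at hzT
    refine M.uniq_aux hcard.symm hrank.symm hzT.1 hzT.2 ?_
      (fun y hyS hyT hzy => hT z hzT.1 y hyS hyT hzy)
    intro u hu huT
    have h1 : u ∈ (S \ T) ∪ (T \ S) :=
      Finset.mem_union.mpr (Or.inl (Finset.mem_sdiff.mpr ⟨hu, huT⟩))
    have h2 := Finset.min'_le _ _ h1
    have h3 : z ≠ u := fun he => huT (he ▸ hzT.1)
    exact lt_of_le_of_ne h2 h3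

/-! ### Counting elements above a threshold -/

lemma count_lt_of_lt {Y : Finset α} {a y : α} (hy : y ∈ Y) (h : a < y) :
    (Y.filter fun w => y < w).card < (Y.filter fun w => a < w).card := by
  have hsub : (Y.filter fun w => y < w) ⊆ Y.filter fun w => a < w := by
    intro u hu
    rw [Finset.mem_filter] at hu ⊢
    exact ⟨hu.1, h.trans hu.2⟩
  apply Finset.card_lt_card
  rw [Finset.ssubset_iff_of_subset hsub]
  exact ⟨y, Finset.mem_filter.mpr ⟨hy, h⟩, fun hc => lt_irrefl y (Finset.mem_filter.mp hc).2⟩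

lemma lt_of_count_lt {Y : Finset α} {a y : α} (ha : a ∈ Y) (hy : y ∈ Y)
    (h : (Y.filter fun w => a < w).card < (Y.filter fun w => y < w).card) : y < a := by
  rcases lt_trichotomy a y with hlt | heq | hgt
  · have := count_lt_of_lt hy hlt
    omega
  · subst heq; omega
  · exact hgt

lemma card_count_filter (Y : Finset α) (s : ℕ) :
    (Y.filter fun y => (Y.filter fun w => y < w).card < s).card = min s Y.card := by
  have H : ∀ (n : ℕ) (Y : Finset α) (s : ℕ), Y.card = n →
      (Y.filter fun y => (Y.filter fun w => y < w).card < s).card = min s Y.card := by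
    intro n
    induction n with
    | zero =>
      intro Y s hY
      rw [Finset.card_eq_zero] at hY
      subst hY
      simp
    | succ n ih =>
      intro Y s hY
      have hne : Y.Nonempty := by rw [← Finset.card_pos]; omega
      set m := Y.max' hne with hm
      have hmY : m ∈ Y := Y.max'_mem hne
      have hY' : (Y.erase m).card = n := by rw [Finset.card_erase_of_mem hmY]; omega
      cases s with
      | zero => simp
      | succ s =>
        have hcount : ∀ y ∈ Y.erase m,
            (Y.filter fun w => y < w) = insert m ((Y.erase m).filter fun w => y < w) := by
          intro y hy
          rw [Finset.mem_erase] at hy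
          ext u
          simp only [Finset.mem_filter, Finset.mem_insert, Finset.mem_erase]
          constructor
          · rintro ⟨huY, hyu⟩
            by_cases hum : u = m
            · exact Or.inl hum
            · exact Or.inr ⟨⟨hum, huY⟩, hyu⟩
          · rintro (rfl | ⟨⟨hum, huY⟩, hyu⟩)
            · exact ⟨hmY, lt_of_le_of_ne (Y.le_max' _ hy.2) hy.1⟩
            · exact ⟨huY, hyu⟩
        have hnotmem : ∀ y : α, m ∉ (Y.erase m).filter fun w => y < w :=
          fun y hc => (Finset.mem_erase.mp (Finset.filter_subset _ _ hc)).1 rfl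
        have hset : (Y.filter fun y => (Y.filter fun w => y < w).card < s + 1)
            = insert m ((Y.erase m).filter fun y =>
                ((Y.erase m).filter fun w => y < w).card < s) := by
          ext y
          simp only [Finset.mem_filter, Finset.mem_insert, Finset.mem_erase]
          constructor
          · rintro ⟨hyY, hcnt⟩
            by_cases hym : y = m
            · exact Or.inl hym
            · refine Or.inr ⟨⟨hym, hyY⟩, ?_⟩
              rw [hcount y (Finset.mem_erase.mpr ⟨hym, hyY⟩),
                Finset.card_insert_of_notMem (hnotmem y)] at hcnt
              omega
          · rintro (rfl | ⟨⟨hym, hyY⟩, hcnt⟩)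
            · refine ⟨hmY, ?_⟩
              have hempty : (Y.filter fun w => m < w) = ∅ := by
                rw [Finset.filter_eq_empty_iff]
                intro w hw
                exact not_lt.mpr (Y.le_max' _ hw)
              rw [hempty]
              simp
            · refine ⟨hyY, ?_⟩
              rw [hcount y (Finset.mem_erase.mpr ⟨hym, hyY⟩),
                Finset.card_insert_of_notMem (hnotmem y)]
              omega
        rw [hset, Finset.card_insert_of_notMem
          (fun hc => (Finset.mem_erase.mp (Finset.filter_subset _ _ hc)).1 rfl),
          ih (Y.erase m) s hY']
        rw [hY', hY]
        omega
  exact H Y.card Y s rfl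
/-! ### The explicit greedy choice -/

/-- The elements that strictly increase the rank of the set of elements above
them: the priority-greedy basis. -/
noncomputable def gI (X : Finset α) : Finset α :=
  X.filter fun x =>
    M.rank (insert x (X.filter fun w => x < w)) ≠ M.rank (X.filter fun w => x < w)

lemma mem_gI {X : Finset α} {a : α} : a ∈ M.gI X ↔ a ∈ X ∧
    M.rank (insert a (X.filter fun w => a < w)) ≠ M.rank (X.filter fun w => a < w) :=
  Finset.mem_filter

lemma gI_subset (X : Finset α) : M.gI X ⊆ X := Finset.filter_subset _ _

/-- Any element outside `gI X` is spanned by the members of `gI X` above it. -/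
lemma key (X : Finset α) : ∀ a ∈ X, a ∉ M.gI X →
    M.rank (insert a ((M.gI X).filter fun w => a < w))
      = M.rank ((M.gI X).filter fun w => a < w) := by
  have H : ∀ (n : ℕ), ∀ a ∈ X, (X.filter fun w => a < w).card < n → a ∉ M.gI X →
      M.rank (insert a ((M.gI X).filter fun w => a < w))
        = M.rank ((M.gI X).filter fun w => a < w) := by
    intro n
    induction n with
    | zero => intro a _ h _; omega
    | succ n ih =>
      intro a haX hcard ha
      have heq : M.rank (insert a (X.filter fun w => a < w))
          = M.rank (X.filter fun w => a < w) := by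
        by_contra hne
        exact ha (M.mem_gI.mpr ⟨haX, hne⟩)
      have hsub : (M.gI X).filter (fun w => a < w) ⊆ X.filter fun w => a < w := by
        intro u hu
        rw [Finset.mem_filter] at hu ⊢
        exact ⟨M.gI_subset X hu.1, hu.2⟩
      have hins : ∀ u ∈ X.filter (fun w => a < w),
          M.rank (insert u ((M.gI X).filter fun w => a < w))
            = M.rank ((M.gI X).filter fun w => a < w) := by
        intro u hu
        rw [Finset.mem_filter] at hu
        by_cases hgu : u ∈ M.gI X
        · rw [Finset.insert_eq_self.mpr (Finset.mem_filter.mpr ⟨hgu, hu.2⟩)]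
        · have hss : X.filter (fun w => u < w) ⊂ X.filter fun w => a < w := by
            rw [Finset.ssubset_iff_of_subset]
            · exact ⟨u, Finset.mem_filter.mpr ⟨hu.1, hu.2⟩,
                fun hc => lt_irrefl u (Finset.mem_filter.mp hc).2⟩
            · intro w hw
              rw [Finset.mem_filter] at hw ⊢
              exact ⟨hw.1, hu.2.trans hw.2⟩
          have hlt : (X.filter fun w => u < w).card < n := by
            have := Finset.card_lt_card hss
            omega
          have hu' := ih u hu.1 hlt hgu
          refine M.rank_insert_eq_of_subset u ?_ hu'
          intro w hw
          rw [Finset.mem_filter] at hw ⊢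
          exact ⟨hw.1, hu.2.trans hw.2⟩
      have hun := M.rank_union_eq hins
      rw [Finset.union_eq_right.mpr hsub] at hun
      have h2 : M.rank (insert a ((M.gI X).filter fun w => a < w))
          ≤ M.rank (insert a (X.filter fun w => a < w)) :=
        M.rank_mono (Finset.insert_subset_insert _ hsub)
      have h3 : M.rank ((M.gI X).filter fun w => a < w)
          ≤ M.rank (insert a ((M.gI X).filter fun w => a < w)) :=
        M.rank_mono (Finset.subset_insert _ _)
      omega
  intro a ha hga
  exact H ((X.filter fun w => a < w).card + 1) a ha (by omega) hga

lemma rank_gI (X : Finset α) : M.rank (M.gI X) = M.rank X := by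
  have hins : ∀ a ∈ X, M.rank (insert a (M.gI X)) = M.rank (M.gI X) := by
    intro a haX
    by_cases hga : a ∈ M.gI X
    · rw [Finset.insert_eq_self.mpr hga]
    · exact M.rank_insert_eq_of_subset a (Finset.filter_subset _ _) (M.key X a haX hga)
  have hun := M.rank_union_eq hins
  rw [Finset.union_eq_right.mpr (M.gI_subset X)] at hun
  exact hun.symm

lemma indep_of_chain : ∀ (n : ℕ) (S : Finset α), S.card ≤ n →
    (∀ x ∈ S, M.rank (insert x (S.filter fun w => x < w))
      ≠ M.rank (S.filter fun w => x < w)) →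
    M.Indep S := by
  intro n
  induction n with
  | zero =>
    intro S hc _
    rw [Nat.le_zero, Finset.card_eq_zero] at hc
    subst hc
    exact M.indep_empty
  | succ n ih =>
    intro S hc h
    rcases S.eq_empty_or_nonempty with rfl | hne
    · exact M.indep_empty
    set m := S.min' hne with hm
    have hmS : m ∈ S := S.min'_mem hne
    have herase : S.erase m = S.filter fun w => m < w := by
      ext u
      rw [Finset.mem_erase, Finset.mem_filter]
      constructor
      · rintro ⟨hne', hu⟩
        exact ⟨hu, lt_of_le_of_ne (S.min'_le u hu) (Ne.symm hne')⟩
      · rintro ⟨hu, hlt⟩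
        exact ⟨ne_of_gt hlt, hu⟩
    have hfil : ∀ x ∈ S.erase m,
        (S.erase m).filter (fun w => x < w) = S.filter fun w => x < w := by
      intro x hx
      have hmx : m < x := lt_of_le_of_ne (S.min'_le x (Finset.mem_of_mem_erase hx))
        (Ne.symm (Finset.ne_of_mem_erase hx))
      ext u
      rw [Finset.mem_filter, Finset.mem_filter, Finset.mem_erase]
      constructor
      · rintro ⟨⟨_, hu⟩, hxu⟩
        exact ⟨hu, hxu⟩
      · rintro ⟨hu, hxu⟩
        exact ⟨⟨ne_of_gt (hmx.trans hxu), hu⟩, hxu⟩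
    have hIH : M.Indep (S.erase m) := by
      apply ih _ (by rw [Finset.card_erase_of_mem hmS]; omega)
      intro x hx
      rw [hfil x hx]
      exact h x (Finset.mem_of_mem_erase hx)
    have hmcond := h m hmS
    rw [← herase] at hmcond
    have h1 := M.rank_of_indep hIH
    have h2 := M.rank_insert_le m (S.erase m)
    have h3 : M.rank (S.erase m) ≤ M.rank (insert m (S.erase m)) :=
      M.rank_mono (Finset.subset_insert _ _)
    have h4 : insert m (S.erase m) = S := Finset.insert_erase hmS
    have h5 : (S.erase m).card + 1 = S.card := Finset.card_erase_add_one hmS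
    have h6 : (insert m (S.erase m)).card = S.card := by rw [h4]
    apply M.indep_of_rank_eq_card
    rw [← h4]
    omega

lemma indep_gI (X : Finset α) : M.Indep (M.gI X) := by
  apply M.indep_of_chain (M.gI X).card _ le_rfl
  intro x hx hcon
  have hsub : (M.gI X).filter (fun w => x < w) ⊆ X.filter fun w => x < w := by
    intro u hu
    rw [Finset.mem_filter] at hu ⊢
    exact ⟨M.gI_subset X hu.1, hu.2⟩
  exact (M.mem_gI.mp hx).2 (M.rank_insert_eq_of_subset x hsub hcon)

lemma card_gI (X : Finset α) : (M.gI X).card = M.rank X := by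
  rw [← M.rank_gI X, M.rank_of_indep (M.indep_gI X)]

lemma gI_heritage {A D : Finset α} (hAD : A ⊆ D) {a : α} (haA : a ∈ A)
    (haD : a ∈ M.gI D) : a ∈ M.gI A := by
  refine M.mem_gI.mpr ⟨haA, ?_⟩
  intro hcon
  refine (M.mem_gI.mp haD).2 (M.rank_insert_eq_of_subset a ?_ hcon)
  intro u hu
  rw [Finset.mem_filter] at hu ⊢
  exact ⟨hAD hu.1, hu.2⟩
variable (q : ℕ)

/-- The filler elements: the top `min |X| q - rank X` of the rest. -/
noncomputable def gF (X : Finset α) : Finset α :=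
  (X \ M.gI X).filter fun y =>
    ((X \ M.gI X).filter fun w => y < w).card < min X.card q - M.rank X

/-- The explicit greedy choice. -/
noncomputable def gC (X : Finset α) : Finset α := M.gI X ∪ M.gF q X

lemma gF_subset (X : Finset α) : M.gF q X ⊆ X \ M.gI X := Finset.filter_subset _ _

lemma gC_subset (X : Finset α) : M.gC q X ⊆ X := by
  apply Finset.union_subset (M.gI_subset X)
  exact (M.gF_subset q X).trans (Finset.sdiff_subset)

lemma card_gF (X : Finset α) : (M.gF q X).card = min X.card q - M.rank X := by
  rw [gF, card_count_filter]
  have h1 : (X \ M.gI X).card = X.card - M.rank X := by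
    rw [Finset.card_sdiff_of_subset (M.gI_subset X), M.card_gI]
  have h2 := M.rank_le_card X
  rw [h1]
  omega

lemma card_gC (hq : ∀ A : Finset α, M.Indep A → A.card ≤ q) (X : Finset α) :
    (M.gC q X).card = min X.card q := by
  have hd : Disjoint (M.gI X) (M.gF q X) := by
    rw [Finset.disjoint_left]
    intro a ha hf
    exact (Finset.mem_sdiff.mp (M.gF_subset q X hf)).2 ha
  rw [gC, Finset.card_union_of_disjoint hd, M.card_gI, M.card_gF]
  have hrq : M.rank X ≤ q := by
    obtain ⟨B, _, hBI, hBc⟩ := M.exists_basis X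
    rw [← hBc]
    exact hq B hBI
  have := M.rank_le_card X
  omega

lemma rank_gC (X : Finset α) : M.rank (M.gC q X) = M.rank X :=
  le_antisymm (M.rank_mono (M.gC_subset q X))
    (by rw [← M.rank_gI X]; exact M.rank_mono Finset.subset_union_left)

/-- No justified envy for the greedy choice. -/
lemma nje_gC {X : Finset α} {x y : α} (hx : x ∈ M.gC q X) (hy : y ∈ X)
    (hyn : y ∉ M.gC q X) (hxy : x < y) :
    M.rank (insert y ((M.gC q X).erase x)) < M.rank (M.gC q X) := by
  have hyI : y ∉ M.gI X := fun h => hyn (Finset.mem_union.mpr (Or.inl h))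
  have hyF : y ∉ M.gF q X := fun h => hyn (Finset.mem_union.mpr (Or.inr h))
  have hymem : y ∈ X \ M.gI X := Finset.mem_sdiff.mpr ⟨hy, hyI⟩
  have hycnt : min X.card q - M.rank X ≤ ((X \ M.gI X).filter fun w => y < w).card := by
    by_contra h
    push_neg at h
    exact hyF (Finset.mem_filter.mpr ⟨hymem, h⟩)
  have hxI : x ∈ M.gI X := by
    rcases Finset.mem_union.mp hx with h | h
    · exact h
    · exfalso
      have hxcnt := (Finset.mem_filter.mp h).2
      have hxel : x ∈ X \ M.gI X := M.gF_subset q X h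
      have := lt_of_count_lt hxel hymem (lt_of_lt_of_le hxcnt hycnt)
      exact absurd hxy (not_lt.mpr this.le)
  have hX₀I : M.Indep ((M.gI X).erase x) :=
    M.indep_subset (M.indep_gI X) (Finset.erase_subset _ _)
  have hX₀c : ((M.gI X).erase x).card = M.rank X - 1 := by
    rw [Finset.card_erase_of_mem hxI, M.card_gI]
  have hXr : 1 ≤ M.rank X := by
    rw [← M.card_gI]
    exact Finset.card_pos.mpr ⟨x, hxI⟩
  have hins : ∀ a ∈ insert y ((M.gC q X).erase x),
      M.rank (insert a ((M.gI X).erase x)) = M.rank ((M.gI X).erase x) := by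
    intro a ha
    rcases Finset.mem_insert.mp ha with rfl | ha'
    · refine M.rank_insert_eq_of_subset _ ?_ (M.key X a hy hyI)
      intro u hu
      rw [Finset.mem_filter] at hu
      exact Finset.mem_erase.mpr ⟨ne_of_gt (hxy.trans hu.2), hu.1⟩
    · have haem := Finset.mem_of_mem_erase ha'
      have hax : a ≠ x := Finset.ne_of_mem_erase ha'
      rcases Finset.mem_union.mp haem with hgi | hgf
      · rw [Finset.insert_eq_self.mpr (Finset.mem_erase.mpr ⟨hax, hgi⟩)]
      · have hacnt := (Finset.mem_filter.mp hgf).2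
        have haI : a ∈ X \ M.gI X := M.gF_subset q X hgf
        have hya : y < a := lt_of_count_lt haI hymem (lt_of_lt_of_le hacnt hycnt)
        have haX : a ∈ X := (Finset.mem_sdiff.mp haI).1
        have hagI : a ∉ M.gI X := (Finset.mem_sdiff.mp haI).2
        refine M.rank_insert_eq_of_subset _ ?_ (M.key X a haX hagI)
        intro u hu
        rw [Finset.mem_filter] at hu
        exact Finset.mem_erase.mpr ⟨ne_of_gt (hxy.trans (hya.trans hu.2)), hu.1⟩
  have hun := M.rank_union_eq hins
  have hle : M.rank (insert y ((M.gC q X).erase x)) ≤ M.rank ((M.gI X).erase x) :=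
    le_trans (M.rank_mono Finset.subset_union_right) (le_of_eq hun)
  have hgc := M.rank_gC q X
  have hrle := M.rank_le_card ((M.gI X).erase x)
  omega

lemma gC_heritage {A D : Finset α} (hAD : A ⊆ D) (hAq : q < A.card) :
    ∀ z ∈ A, z ∈ M.gC q D → z ∈ M.gC q A := by
  intro z hzA hzD
  rcases Finset.mem_union.mp hzD with hgi | hgf
  · exact Finset.mem_union.mpr (Or.inl (M.gI_heritage hAD hzA hgi))
  · by_cases hzAI : z ∈ M.gI A
    · exact Finset.mem_union.mpr (Or.inl hzAI)
    · refine Finset.mem_union.mpr (Or.inr ?_)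
      rw [gF, Finset.mem_filter]
      refine ⟨Finset.mem_sdiff.mpr ⟨hzA, hzAI⟩, ?_⟩
      have hzDF := (Finset.mem_filter.mp hgf).2
      have hcnt : ((A \ M.gI A).filter fun w => z < w).card
          ≤ ((D \ M.gI D).filter fun w => z < w).card := by
        apply Finset.card_le_card
        intro u hu
        rw [Finset.mem_filter, Finset.mem_sdiff] at hu ⊢
        exact ⟨⟨hAD hu.1.1, fun hc => hu.1.2 (M.gI_heritage hAD hu.1.1 hc)⟩, hu.2⟩
      have hrAD : M.rank A ≤ M.rank D := M.rank_mono hAD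
      have hDq : q < D.card := lt_of_lt_of_le hAq (Finset.card_le_card hAD)
      omega

end LO
end FinMatroid

/-- For a matroid all of whose independent sets have cardinality at most `q`,
every choice rule satisfying matroidal objectives, no justified envy under
rank, and non-wastefulness satisfies path independence and size
monotonicity. -/
theorem nonWastefulMatroid_pathIndependent_sizeMonotone
    {α : Type*} [Fintype α] [LinearOrder α] (M : FinMatroid α) (q : ℕ)
    (hq : ∀ A : Finset α, M.Indep A → A.card ≤ q)
    (C : Finset α → Finset α) (hC : ∀ A : Finset α, C A ⊆ A)
    -- (i) matroidal objectives
    (hMO : ∀ A A' : Finset α, A' ⊆ A → M.rank A' ≤ M.rank (C A))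
    -- (ii) no justified envy under rank
    (hNJE : ∀ A : Finset α, ∀ x ∈ C A, ∀ y ∈ A \ C A,
      y > x → M.rank (insert y ((C A).erase x)) < M.rank (C A))
    -- (iii) non-wastefulness
    (hNW : ∀ A : Finset α, (C A).card = min A.card q) :
    (∀ A B : Finset α, C (A ∪ B) = C (C A ∪ B)) ∧
    (∀ A B : Finset α, A ⊆ B → (C A).card ≤ (C B).card) := by
  classical
  have hrankC : ∀ A : Finset α, M.rank (C A) = M.rank A :=
    fun A => le_antisymm (M.rank_mono (hC A)) (hMO A A Finset.Subset.rfl)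
  -- the choice rule coincides with the explicit greedy choice
  have hCeq : ∀ X : Finset α, C X = M.gC q X := by
    intro X
    apply M.uniq
    · rw [hNW X, M.card_gC q hq X]
    · rw [hrankC X, M.rank_gC q X]
    · intro x hx y hy hyn hxy
      exact hNJE X x hx y (Finset.mem_sdiff.mpr ⟨M.gC_subset q X hy, hyn⟩) hxy
    · intro x hx y hy hyn hxy
      exact M.nje_gC q hx (hC X hy) hyn hxy
  have hCfull : ∀ X : Finset α, X.card ≤ q → C X = X := by
    intro X hXq
    apply Finset.eq_of_subset_of_card_le (hC X)
    rw [hNW X]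
    omega
  -- heritage (substitutability)
  have heritage : ∀ A D : Finset α, A ⊆ D → ∀ z ∈ A, z ∈ C D → z ∈ C A := by
    intro A D hAD z hzA hzD
    by_cases hAq : A.card ≤ q
    · rw [hCfull A hAq]; exact hzA
    · rw [hCeq] at hzD ⊢
      exact M.gC_heritage q hAD (by omega) z hzA hzD
  -- outcast (irrelevance of rejected contracts)
  have outcast : ∀ Y Z : Finset α, C Z ⊆ Y → Y ⊆ Z → C Y = C Z := by
    intro Y Z hsub hYZ
    by_cases hZq : Z.card ≤ q
    · have hz := hCfull Z hZq
      have hYeq : Y = Z := Finset.Subset.antisymm hYZ (hz ▸ hsub)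
      rw [hYeq]
    · have hqY : q ≤ Y.card := by
        have h1 := Finset.card_le_card hsub
        rw [hNW Z] at h1
        omega
      apply M.uniq
      · rw [hNW Y, hNW Z]
        have := Finset.card_le_card hYZ
        omega
      · have h1 : M.rank Y = M.rank Z := by
          refine le_antisymm (M.rank_mono hYZ) ?_
          calc M.rank Z = M.rank (C Z) := (hrankC Z).symm
            _ ≤ M.rank Y := M.rank_mono hsub
        rw [hrankC Y, hrankC Z, h1]
      · intro x hx y hy hyn hxy
        exact hNJE Y x hx y (Finset.mem_sdiff.mpr ⟨hsub hy, hyn⟩) hxy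
      · intro x hx y hy hyn hxy
        exact hNJE Z x hx y (Finset.mem_sdiff.mpr ⟨hYZ (hC Y hy), hyn⟩) hxy
  constructor
  · intro A B
    have hsub1 : C (A ∪ B) ⊆ C A ∪ B := by
      intro x hx
      rcases Finset.mem_union.mp (hC _ hx) with hA | hB
      · by_cases hxB : x ∈ B
        · exact Finset.mem_union.mpr (Or.inr hxB)
        · exact Finset.mem_union.mpr
            (Or.inl (heritage A (A ∪ B) Finset.subset_union_left x hA hx))
      · exact Finset.mem_union.mpr (Or.inr hB)
    have hsub2 : C A ∪ B ⊆ A ∪ B := Finset.union_subset_union (hC A) Finset.Subset.rfl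
    exact (outcast _ _ hsub1 hsub2).symm
  · intro A B hAB
    rw [hNW A, hNW B]
    have := Finset.card_le_card hAB
    omega
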